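/- Let m and n be positive integers with m dividing n. If there exist two binary sequences of length m that are nontrivially equicorrelational to each other, then there exist two binary sequences of length n that are nontrivially equicorrelational to each other. -/

import Mathlib

open LaurentPolynomial
open scoped Classical

/-- The length of a Laurent polynomial: 1 plus the difference between the maximal and
minimal exponents occurring with nonzero coefficient; the length of 0 is 0. -/
noncomputable def len {F : Type*} [Field F] (f : LaurentPolynomial F) : ℤ :=
  if h : f = 0 then 0
  else f.coeff.support.max' (Finsupp.support_nonempty_iff.mpr
        fun h' => h (AddMonoidAlgebra.coeff_injective (h'.trans AddMonoidAlgebra.coeff_zero.symm)))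
     - f.coeff.support.min' (Finsupp.support_nonempty_iff.mpr
        fun h' => h (AddMonoidAlgebra.coeff_injective (h'.trans AddMonoidAlgebra.coeff_zero.symm))) + 1

/-- Substitution `f(z) ↦ f(z^m)`: the image of `f` under the ring homomorphism
sending `z` to `z^m`. -/
noncomputable def subst {F : Type*} [Field F] (m : ℤ) (f : LaurentPolynomial F) :
    LaurentPolynomial F :=
  AddMonoidAlgebra.mapDomainRingHom F (AddMonoidHom.mulLeft m) f

/-- The subring `F[z,z⁻¹]` of `E[z,z⁻¹]` consisting of Laurent polynomials all of whose
coefficients lie in the subfield `F` of `E`. -/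
noncomputable def LRing {E : Type*} [Field E] (F : Subfield E) :
    Subring (LaurentPolynomial E) where
  carrier := {f : LaurentPolynomial E | ∀ n : ℤ, f.coeff n ∈ F}
  zero_mem' := fun n => F.zero_mem
  one_mem' := by
    intro n
    rw [AddMonoidAlgebra.one_def, AddMonoidAlgebra.coeff_single, Finsupp.single_apply]
    split_ifs
    · exact F.one_mem
    · exact F.zero_mem
  add_mem' := by
    intro f g hf hg n
    rw [AddMonoidAlgebra.coeff_add, Finsupp.add_apply]
    exact add_mem (hf n) (hg n)
  neg_mem' := by
    intro f hf n
    rw [AddMonoidAlgebra.coeff_neg, Finsupp.neg_apply]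
    exact neg_mem (hf n)
  mul_mem' := by
    intro f g hf hg n
    rw [AddMonoidAlgebra.coeff_mul]
    refine sum_mem fun a ha => sum_mem fun b hb => ?_
    dsimp only
    split_ifs
    · exact mul_mem (hf a) (hg b)
    · exact zero_mem F

/-- The conjugate of `f(z) = Σ f_j z^j`, namely `f̄(z) = Σ conj(f_j) z^{-j}`. -/
noncomputable def lconj (f : LaurentPolynomial ℂ) : LaurentPolynomial ℂ :=
  AddMonoidAlgebra.ofCoeff
    (Finsupp.equivMapDomain (Equiv.neg ℤ) (Finsupp.mapRange (starRingEnd ℂ) (map_zero _) f.coeff))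

/-- `f` and `g` are equicorrelational: `f·f̄ = c·g·ḡ` for some positive real `c`. -/
def Equicorrelational (f g : LaurentPolynomial ℂ) : Prop :=
  ∃ c : ℝ, 0 < c ∧ f * lconj f = C (c : ℂ) * (g * lconj g)

/-- `f` and `g` are trivially equicorrelational: `g` is a `ℂ[z,z⁻¹]`-associate of `f`
or of `f̄`. -/
def TrivEquicorrelational (f g : LaurentPolynomial ℂ) : Prop :=
  Associated g f ∨ Associated g (lconj f)

/-- A generalized palindrome: `f̄` is a `ℂ[z,z⁻¹]`-associate of `f`. -/
def GenPalindrome (f : LaurentPolynomial ℂ) : Prop :=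
  Associated (lconj f) f

/-- `g` is an `F[z,z⁻¹]`-associate of `f`: `g = u·f` for some unit `u` of the subring
`F[z,z⁻¹]` of `ℂ[z,z⁻¹]`. -/
def FAssoc (F : Subfield ℂ) (g f : LaurentPolynomial ℂ) : Prop :=
  ∃ u : (LRing F)ˣ, g = ((u : LRing F) : LaurentPolynomial ℂ) * f

/-- The `F[z,z⁻¹]`-associate class of `f`. -/
def facl (F : Subfield ℂ) (f : LaurentPolynomial ℂ) : Set (LaurentPolynomial ℂ) :=
  {g | FAssoc F g f}

/-- The `F`-trivial equicorrelationality class of `f`: all elements of `F[z,z⁻¹]`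
that are trivially equicorrelational to `f`. -/
def fte (F : Subfield ℂ) (f : LaurentPolynomial ℂ) : Set (LaurentPolynomial ℂ) :=
  {g | g ∈ LRing F ∧ TrivEquicorrelational f g}

/-- A `k`-ary sequence: a Laurent polynomial whose support is a segment of consecutive
integers and whose nonzero coefficients are complex `k`-th roots of unity. -/
def IsKary (k : ℕ) (f : LaurentPolynomial ℂ) : Prop :=
  (∀ i j l : ℤ, i ≤ j → j ≤ l → f.coeff i ≠ 0 → f.coeff l ≠ 0 → f.coeff j ≠ 0) ∧
  ∀ n : ℤ, f.coeff n ≠ 0 → (f.coeff n) ^ k = 1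

/-- A binary sequence: a Laurent polynomial whose support is a segment of consecutive
integers and whose nonzero coefficients all lie in `{1, -1}`. -/
def IsBinary (f : LaurentPolynomial ℂ) : Prop :=
  (∀ i j l : ℤ, i ≤ j → j ≤ l → f.coeff i ≠ 0 → f.coeff l ≠ 0 → f.coeff j ≠ 0) ∧
  ∀ n : ℤ, f.coeff n ≠ 0 → f.coeff n = 1 ∨ f.coeff n = -1

/-!
With `s = 1 + z^m + ⋯ + z^{(k-1)m}`, the products `b s` and `d s` are the `k`-fold
concatenations of `b` and `d`, hence binary sequences of length `km`. Multiplying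
`b b̄ = c d d̄` by `s s̄` shows that they are equicorrelational. Since `s̄ = z^{-(k-1)m} s`,
a trivial equicorrelation between `b s` and `d s` cancels, in the domain `ℂ[z,z⁻¹]`, to one
between `b` and `d`.
-/
noncomputable def lconjRingHom : LaurentPolynomial ℂ →+* LaurentPolynomial ℂ :=
  (invert : LaurentPolynomial ℂ ≃ₐ[ℂ] _).toRingHom.comp
    (AddMonoidAlgebra.mapRingHom ℤ (starRingEnd ℂ))

@[simp]
lemma lconjRingHom_apply (f : LaurentPolynomial ℂ) : lconjRingHom f = lconj f := by
  ext n
  simp [lconjRingHom, lconj, AddMonoidAlgebra.coeff_ofCoeff, Finsupp.equivMapDomain_apply]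

lemma lconj_mul (f g : LaurentPolynomial ℂ) : lconj (f * g) = lconj f * lconj g := by
  simpa only [lconjRingHom_apply] using map_mul lconjRingHom f g

lemma lconj_sum {ι : Type*} (s : Finset ι) (f : ι → LaurentPolynomial ℂ) :
    lconj (∑ i ∈ s, f i) = ∑ i ∈ s, lconj (f i) := by
  simpa only [lconjRingHom_apply] using map_sum lconjRingHom f s

lemma lconj_T (n : ℤ) : lconj (T n) = T (-n) := by
  rw [← lconjRingHom_apply, lconjRingHom, RingHom.comp_apply, T,
    AddMonoidAlgebra.mapRingHom_single, map_one]
  exact invert_T n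

lemma len_zero {F : Type*} [Field F] : len (0 : LaurentPolynomial F) = 0 := by
  simp [len]

lemma len_nonneg {F : Type*} [Field F] (f : LaurentPolynomial F) : 0 ≤ len f := by
  rw [len]
  split_ifs
  · exact le_rfl
  · exact add_nonneg (sub_nonneg.mpr (Finset.min'_le_max' _ _)) zero_le_one

lemma coeff_T_mul {R : Type*} [Semiring R] (j y : ℤ) (f : LaurentPolynomial R) :
    (T j * f).coeff y = f.coeff (y - j) := by
  rw [T, AddMonoidAlgebra.coeff_single_mul_apply, one_mul, neg_add_eq_sub]

lemma Equicorrelational.mul_right {b d : LaurentPolynomial ℂ} (h : Equicorrelational b d)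
    (s : LaurentPolynomial ℂ) : Equicorrelational (b * s) (d * s) := by
  obtain ⟨c, hc, hbd⟩ := h
  refine ⟨c, hc, ?_⟩
  calc b * s * lconj (b * s) = b * lconj b * (s * lconj s) := by rw [lconj_mul]; ring
    _ = C (c : ℂ) * (d * lconj d) * (s * lconj s) := by rw [hbd]
    _ = C (c : ℂ) * (d * s * lconj (d * s)) := by rw [lconj_mul]; ring

lemma TrivEquicorrelational.of_mul_right {b d s : LaurentPolynomial ℂ} (hs : GenPalindrome s)
    (hs0 : s ≠ 0) (h : TrivEquicorrelational (b * s) (d * s)) : TrivEquicorrelational b d := by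
  rcases h with h | h
  · exact Or.inl (h.of_mul_right (Associated.refl s) hs0)
  · rw [lconj_mul] at h
    exact Or.inr (h.of_mul_right hs.symm hs0)

/-- Multiplying a sequence of length `M` by `repeatPoly k M` concatenates `k` copies of it. -/
noncomputable def repeatPoly (k : ℕ) (M : ℤ) : LaurentPolynomial ℂ :=
  ∑ i ∈ Finset.range k, T (i * M)

lemma T_mul_lconj_repeatPoly (k : ℕ) (M : ℤ) :
    T ((k - 1) * M) * lconj (repeatPoly k M) = repeatPoly k M := by
  rw [repeatPoly, lconj_sum, Finset.mul_sum, ← Finset.sum_range_reflect]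
  refine Finset.sum_congr rfl fun i hi => ?_
  rw [lconj_T, ← T_add]
  congr 1
  have hik := Finset.mem_range.mp hi
  rw [Nat.cast_sub (by omega), Nat.cast_sub (by omega)]
  push_cast
  ring

lemma genPalindrome_repeatPoly (k : ℕ) (M : ℤ) : GenPalindrome (repeatPoly k M) :=
  ⟨(isUnit_T ((k - 1) * M)).unit, by
    rw [IsUnit.unit_spec, mul_comm]; exact T_mul_lconj_repeatPoly k M⟩

def IsBinaryOn (f : LaurentPolynomial ℂ) (s : Set ℤ) : Prop :=
  (∀ y ∈ s, f.coeff y = 1 ∨ f.coeff y = -1) ∧ ∀ y ∉ s, f.coeff y = 0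

namespace IsBinaryOn

variable {f g : LaurentPolynomial ℂ} {s t : Set ℤ}

lemma coeff_ne_zero_iff (h : IsBinaryOn f s) (y : ℤ) : f.coeff y ≠ 0 ↔ y ∈ s := by
  refine ⟨fun hy => by_contra fun hys => hy (h.2 y hys), fun hys => ?_⟩
  rcases h.1 y hys with h1 | h1 <;> simp [h1]

lemma add (hf : IsBinaryOn f s) (hg : IsBinaryOn g t) (hst : Disjoint s t) :
    IsBinaryOn (f + g) (s ∪ t) := by
  refine ⟨fun y hy => ?_, fun y hy => ?_⟩
  · rcases hy with hy | hy
    · simpa [hg.2 y (Set.disjoint_left.mp hst hy)] using hf.1 y hy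
    · simpa [hf.2 y (Set.disjoint_right.mp hst hy)] using hg.1 y hy
  · rw [Set.mem_union, not_or] at hy
    simp [hf.2 y hy.1, hg.2 y hy.2]

lemma T_mul (hf : IsBinaryOn f s) (j : ℤ) : IsBinaryOn (T j * f) ((· - j) ⁻¹' s) := by
  simp only [IsBinaryOn, coeff_T_mul]
  exact ⟨fun y hy => hf.1 _ hy, fun y hy => hf.2 _ hy⟩

lemma mul_repeatPoly {a M : ℤ} (hf : IsBinaryOn f (Set.Ico a (a + M))) (hM : 0 ≤ M) (k : ℕ) :
    IsBinaryOn (f * repeatPoly k M) (Set.Ico a (a + k * M)) := by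
  induction k with
  | zero => simp [repeatPoly, IsBinaryOn]
  | succ k ih =>
    have hshift := hf.T_mul (k * M)
    rw [Set.preimage_sub_const_Ico] at hshift
    have hk : (0 : ℤ) ≤ k * M := mul_nonneg k.cast_nonneg hM
    rw [repeatPoly, Finset.sum_range_succ, mul_add, mul_comm f (T _), ← repeatPoly]
    convert ih.add hshift Set.Ico_disjoint_Ico_same using 1
    rw [show a + M + k * M = a + (k + 1 : ℕ) * M by push_cast; ring]
    exact (Set.Ico_union_Ico_eq_Ico (by linarith) (by push_cast; linarith)).symm

lemma isBinary {a b : ℤ} (h : IsBinaryOn f (Set.Ico a b)) : IsBinary f := by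
  refine ⟨fun i j l hij hjl hi hl => ?_, fun y hy => h.1 y ((h.coeff_ne_zero_iff y).mp hy)⟩
  rw [h.coeff_ne_zero_iff] at hi hl ⊢
  exact ⟨hi.1.trans hij, hjl.trans_lt hl.2⟩

lemma support_eq {a b : ℤ} (h : IsBinaryOn f (Set.Ico a b)) :
    f.coeff.support = Finset.Ico a b := by
  ext y
  rw [Finsupp.mem_support_iff, h.coeff_ne_zero_iff, Finset.mem_Ico, Set.mem_Ico]

lemma len_eq {a b : ℤ} (h : IsBinaryOn f (Set.Ico a b)) (hab : a ≤ b) : len f = b - a := by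
  rcases hab.eq_or_lt with rfl | hab
  · have hf0 : f = 0 := AddMonoidAlgebra.coeff_injective (Finsupp.ext fun y => h.2 y (by simp))
    rw [hf0, len_zero, sub_self]
  have hf0 : f ≠ 0 := fun h0 => by
    simpa [h0] using (h.coeff_ne_zero_iff a).mpr ⟨le_rfl, hab⟩
  simp only [len, dif_neg hf0, h.support_eq]
  rw [(Finset.max'_eq_iff _ _ (b - 1)).mpr ⟨Finset.mem_Ico.mpr ⟨by omega, by omega⟩,
      fun y hy => by rw [Finset.mem_Ico] at hy; omega⟩,
    (Finset.min'_eq_iff _ _ a).mpr ⟨Finset.mem_Ico.mpr ⟨le_rfl, hab⟩,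
      fun y hy => (Finset.mem_Ico.mp hy).1⟩]
  ring

end IsBinaryOn

lemma IsBinary.exists_isBinaryOn {f : LaurentPolynomial ℂ} (hf : IsBinary f) :
    ∃ a, IsBinaryOn f (Set.Ico a (a + len f)) := by
  rcases eq_or_ne f 0 with rfl | hf0
  · exact ⟨0, by simp [IsBinaryOn, len_zero]⟩
  have hne : f.coeff.support.Nonempty := Finsupp.support_nonempty_iff.mpr
    fun h' => hf0 (AddMonoidAlgebra.coeff_injective (h'.trans AddMonoidAlgebra.coeff_zero.symm))
  have hlen : len f = f.coeff.support.max' hne - f.coeff.support.min' hne + 1 := by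
    rw [len, dif_neg hf0]
  refine ⟨f.coeff.support.min' hne, fun y hy => hf.2 y ?_, fun y hy => ?_⟩
  · rw [Set.mem_Ico, hlen] at hy
    exact hf.1 _ y _ hy.1 (by omega) (Finsupp.mem_support_iff.mp (Finset.min'_mem _ hne))
      (Finsupp.mem_support_iff.mp (Finset.max'_mem _ hne))
  · by_contra hy0
    have hmem := Finsupp.mem_support_iff.mpr hy0
    have hmin := Finset.min'_le _ _ hmem
    have hmax := Finset.le_max' _ _ hmem
    exact hy ⟨by omega, by omega⟩

lemma IsBinary.mul_repeatPoly {f : LaurentPolynomial ℂ} (hf : IsBinary f) (k : ℕ) :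
    IsBinary (f * repeatPoly k (len f)) ∧ len (f * repeatPoly k (len f)) = k * len f := by
  obtain ⟨a, ha⟩ := hf.exists_isBinaryOn
  have h := ha.mul_repeatPoly (len_nonneg f) k
  refine ⟨h.isBinary, ?_⟩
  rw [h.len_eq (le_add_of_nonneg_right (mul_nonneg k.cast_nonneg (len_nonneg f)))]
  ring

theorem stmt19_general (m n : ℕ) (hn : 0 < n) (hmn : m ∣ n)
    (h : ∃ b d : LaurentPolynomial ℂ, IsBinary b ∧ IsBinary d ∧
      len b = (m : ℤ) ∧ len d = (m : ℤ) ∧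
      Equicorrelational b d ∧ ¬ TrivEquicorrelational b d) :
    ∃ f g : LaurentPolynomial ℂ, IsBinary f ∧ IsBinary g ∧
      len f = (n : ℤ) ∧ len g = (n : ℤ) ∧
      Equicorrelational f g ∧ ¬ TrivEquicorrelational f g := by
  obtain ⟨b, d, hb, hd, hlb, hld, hbd, hntriv⟩ := h
  obtain ⟨k, rfl⟩ := hmn
  obtain ⟨hbs, hlbs⟩ := hb.mul_repeatPoly k
  obtain ⟨hds, hlds⟩ := hd.mul_repeatPoly k
  rw [hlb] at hbs hlbs
  rw [hld] at hds hlds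
  have hkm : (k : ℤ) * m = (m * k : ℕ) := by push_cast; ring
  have hs0 : repeatPoly k m ≠ 0 := right_ne_zero_of_mul <| ne_of_apply_ne len <| by
    rw [hlbs, hkm, len_zero]
    exact_mod_cast hn.ne'
  exact ⟨_, _, hbs, hds, hlbs.trans hkm, hlds.trans hkm, hbd.mul_right _,
    fun htriv => hntriv (htriv.of_mul_right (genPalindrome_repeatPoly k m) hs0)⟩

theorem stmt19 (m n : ℕ) (hm : 0 < m) (hn : 0 < n) (hmn : m ∣ n)
    (h : ∃ b d : LaurentPolynomial ℂ, IsBinary b ∧ IsBinary d ∧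
      len b = (m : ℤ) ∧ len d = (m : ℤ) ∧
      Equicorrelational b d ∧ ¬ TrivEquicorrelational b d) :
    ∃ f g : LaurentPolynomial ℂ, IsBinary f ∧ IsBinary g ∧
      len f = (n : ℤ) ∧ len g = (n : ℤ) ∧
      Equicorrelational f g ∧ ¬ TrivEquicorrelational f g :=
  stmt19_general m n hn hmn h
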